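/- arXiv:1003.5923 — 4 statements merged into one kernel-verified Lean document; each statement's English description precedes it below -/
import Mathlib

section
/- Let H, T be closed operators on a Hilbert space with common domain D(T), let χ, χ̄ be commuting bounded operators with χ² + χ̄² = 1, and suppose (H,T) is a Feshbach pair for χ. Then on D(T) one has the identity H·Q_χ = χ·F_χ(H,T), where Q_χ := χ − χ̄ H_{χ̄}⁻¹ χ̄ W χ and F_χ(H,T) := H_χ − χ W χ̄ H_{χ̄}⁻¹ χ̄ W χ, with W := H − T, W_χ := χWχ, H_χ := T + W_χ, H_{χ̄} := T + χ̄Wχ̄. -/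
private lemma feshbach_aux {R : Type*} [Ring R] (H T c d S : R)
    (hone : c * c + d * d = 1)
    (hc : c * T = T * c) (hd : d * T = T * d)
    (hK : (T + d * (H - T) * d) * S = d * (H - T) * c) :
    H * (c - d * S) = c * (T + c * (H - T) * c - c * (H - T) * d * S) := by
  have main : H * (c - d * S) - c * (T + c * (H - T) * c - c * (H - T) * d * S)
      = (T * c - c * T) + (c * c + d * d - 1) * ((H - T) * d * S - (H - T) * c)
        + (d * (T * S) - T * (d * S)) - d * ((T + d * (H - T) * d) * S - d * (H - T) * c) := by
    noncomm_ring
  have h1 : T * c - c * T = 0 := by rw [← hc, sub_self]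
  have h2 : c * c + d * d - 1 = 0 := by rw [hone, sub_self]
  have h3 : d * (T * S) - T * (d * S) = 0 := by
    rw [← mul_assoc, ← mul_assoc, hd, sub_self]
  have h4 : (T + d * (H - T) * d) * S - d * (H - T) * c = 0 := by rw [hK, sub_self]
  rw [h1, h2, h3, h4, zero_mul, mul_zero, zero_add, add_zero, sub_zero] at main
  exact sub_eq_zero.mp main

/-- basic Feshbach identity `H Q_χ = χ F_χ(H,T)`.
We work with (bounded realizations of) operators with common domain the whole space.
`χ, χb` are commuting bounded operators with `χ² + χ̄² = 1`.  The Feshbach-pair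
conditions are encoded as: (a) `χ` and `χ̄` commute with `T`; (b) `T` and
`H_{χ̄} = T + χ̄Wχ̄` map `Ran χ̄` bijectively onto itself, with bounded inverses
`Tinv`, `Rinv` (pinned on `Ran χ̄`); (c) boundedness of `χ̄H_{χ̄}⁻¹χ̄Wχ` is automatic.
Then `H ∘ Q_χ = χ ∘ F_χ(H,T)` with
`Q_χ = χ − χ̄ H_{χ̄}⁻¹ χ̄ W χ` and `F_χ(H,T) = (T + χWχ) − χWχ̄ H_{χ̄}⁻¹ χ̄ W χ`. -/
theorem feshbach_basic_identity
    (𝓗 : Type*) [NormedAddCommGroup 𝓗] [InnerProductSpace ℂ 𝓗] [CompleteSpace 𝓗]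
    (Hop Top χ χb Tinv Rinv : 𝓗 →L[ℂ] 𝓗)
    (hcomm : χ * χb = χb * χ)
    (hone : χ * χ + χb * χb = 1)
    (haχ : χ * Top = Top * χ) (haχb : χb * Top = Top * χb)
    (hTmap : Set.MapsTo Top (Set.range χb) (Set.range χb))
    (hTinv1 : ∀ y ∈ Set.range χb, Tinv (Top y) = y)
    (hTinv2 : ∀ y ∈ Set.range χb, Top (Tinv y) = y)
    (hHmap : Set.MapsTo (Top + χb * (Hop - Top) * χb) (Set.range χb) (Set.range χb))
    (hRinv1 : ∀ y ∈ Set.range χb, Rinv ((Top + χb * (Hop - Top) * χb) y) = y)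
    (hRinv2 : ∀ y ∈ Set.range χb, (Top + χb * (Hop - Top) * χb) (Rinv y) = y) :
    Hop * (χ - χb * Rinv * (χb * (Hop - Top) * χ)) =
      χ * ((Top + χ * (Hop - Top) * χ)
            - χ * (Hop - Top) * χb * Rinv * (χb * (Hop - Top) * χ)) := by
  have hK : (Top + χb * (Hop - Top) * χb) * (Rinv * (χb * (Hop - Top) * χ))
      = χb * (Hop - Top) * χ := by
    ext x
    have := hRinv2 ((χb * (Hop - Top) * χ) x) ⟨((Hop - Top) * χ) x, rfl⟩
    simpa [ContinuousLinearMap.mul_apply] using this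
  have h := feshbach_aux Hop Top χ χb (Rinv * (χb * (Hop - Top) * χ)) hone haχ haχb hK
  rw [mul_assoc χb Rinv, mul_assoc (χ * (Hop - Top) * χb) Rinv]
  exact h
end

section
/- Let (H,T) be a Feshbach pair for χ. If ψ ∈ ker H, then χψ ∈ ker F_χ(H,T); and if φ ∈ ker F_χ(H,T), then Q_χ φ ∈ ker H. Moreover χ : ker H → ker F_χ(H,T) and Q_χ : ker F_χ(H,T) → ker H are linear isomorphisms inverse to each other. -/
/-- isospectrality of the Feshbach map on kernels.
With the Feshbach-pair conditions encoded as in the bounded setting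
(`χ, χ̄` commuting, `χ² + χ̄² = 1`, `χT = Tχ`, `χ̄T = Tχ̄`, and `T`, `H_{χ̄}`
bijections of `Ran χ̄` with bounded inverses `Tinv`, `Rinv`), the maps
`χ : ker H → ker F_χ(H,T)` and `Q_χ : ker F_χ(H,T) → ker H` are well defined and
mutually inverse linear isomorphisms, where `W = H − T`,
`F_χ(H,T) = (T + χWχ) − χWχ̄ H_{χ̄}⁻¹ χ̄ W χ` and `Q_χ = χ − χ̄ H_{χ̄}⁻¹ χ̄ W χ`. -/
theorem feshbach_kernel_isomorphism
    (𝓗 : Type*) [NormedAddCommGroup 𝓗] [InnerProductSpace ℂ 𝓗] [CompleteSpace 𝓗]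
    (Hop Top χ χb Tinv Rinv : 𝓗 →L[ℂ] 𝓗)
    (hcomm : χ * χb = χb * χ)
    (hone : χ * χ + χb * χb = 1)
    (haχ : χ * Top = Top * χ) (haχb : χb * Top = Top * χb)
    (hTmap : Set.MapsTo Top (Set.range χb) (Set.range χb))
    (hTinv1 : ∀ y ∈ Set.range χb, Tinv (Top y) = y)
    (hTinv2 : ∀ y ∈ Set.range χb, Top (Tinv y) = y)
    (hHmap : Set.MapsTo (Top + χb * (Hop - Top) * χb) (Set.range χb) (Set.range χb))
    (hRinv1 : ∀ y ∈ Set.range χb, Rinv ((Top + χb * (Hop - Top) * χb) y) = y)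
    (hRinv2 : ∀ y ∈ Set.range χb, (Top + χb * (Hop - Top) * χb) (Rinv y) = y) :
    (∀ ψ : 𝓗, Hop ψ = 0 →
        ((Top + χ * (Hop - Top) * χ)
          - χ * (Hop - Top) * χb * Rinv * (χb * (Hop - Top) * χ)) (χ ψ) = 0) ∧
    (∀ φ : 𝓗,
        ((Top + χ * (Hop - Top) * χ)
          - χ * (Hop - Top) * χb * Rinv * (χb * (Hop - Top) * χ)) φ = 0 →
        Hop ((χ - χb * Rinv * (χb * (Hop - Top) * χ)) φ) = 0) ∧
    (∀ ψ : 𝓗, Hop ψ = 0 → (χ - χb * Rinv * (χb * (Hop - Top) * χ)) (χ ψ) = ψ) ∧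
    (∀ φ : 𝓗,
        ((Top + χ * (Hop - Top) * χ)
          - χ * (Hop - Top) * χb * Rinv * (χb * (Hop - Top) * χ)) φ = 0 →
        χ ((χ - χb * Rinv * (χb * (Hop - Top) * χ)) φ) = φ) := by
  set W := Hop - Top with hW
  have happ : ∀ x : 𝓗, W x = Hop x - Top x := by
    intro x; rw [hW, ContinuousLinearMap.sub_apply]
  have hTW : ∀ x : 𝓗, Top x + W x = Hop x := by
    intro x; rw [happ x]; abel
  have hone' : ∀ x : 𝓗, χ (χ x) + χb (χb x) = x := by
    intro x
    simpa [ContinuousLinearMap.add_apply, ContinuousLinearMap.mul_apply]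
      using congrArg (fun A : 𝓗 →L[ℂ] 𝓗 => A x) hone
  have hcomm' : ∀ x : 𝓗, χ (χb x) = χb (χ x) := by
    intro x
    simpa [ContinuousLinearMap.mul_apply]
      using congrArg (fun A : 𝓗 →L[ℂ] 𝓗 => A x) hcomm
  have haχ' : ∀ x : 𝓗, χ (Top x) = Top (χ x) := by
    intro x
    simpa [ContinuousLinearMap.mul_apply]
      using congrArg (fun A : 𝓗 →L[ℂ] 𝓗 => A x) haχ
  have haχb' : ∀ x : 𝓗, χb (Top x) = Top (χb x) := by
    intro x
    simpa [ContinuousLinearMap.mul_apply]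
      using congrArg (fun A : 𝓗 →L[ℂ] 𝓗 => A x) haχb
  -- key identity: H_{χb}(χb ψ) = χb(Hop ψ) - χb(W(χ(χ ψ)))
  have key : ∀ ψ : 𝓗, (Top + χb * W * χb) (χb ψ) = χb (Hop ψ) - χb (W (χ (χ ψ))) := by
    intro ψ
    calc (Top + χb * W * χb) (χb ψ)
        = Top (χb ψ) + χb (W (χb (χb ψ))) := by
          simp [ContinuousLinearMap.add_apply, ContinuousLinearMap.mul_apply]
      _ = χb (Top ψ) + χb (W (ψ - χ (χ ψ))) := by
          rw [← haχb' ψ]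
          congr 3
          have := hone' ψ
          rw [eq_sub_iff_add_eq]
          rw [add_comm]
          exact this
      _ = χb (Top ψ + W ψ) - χb (W (χ (χ ψ))) := by
          rw [map_sub, map_sub, map_add]
          abel
      _ = χb (Hop ψ) - χb (W (χ (χ ψ))) := by rw [hTW ψ]
  have kerR : ∀ ψ : 𝓗, Hop ψ = 0 → Rinv (χb (W (χ (χ ψ)))) = -(χb ψ) := by
    intro ψ hψ
    have h := key ψ
    rw [hψ, map_zero, zero_sub] at h
    have h2 : χb (W (χ (χ ψ))) = -((Top + χb * W * χb) (χb ψ)) := by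
      rw [h, neg_neg]
    rw [h2, map_neg, hRinv1 _ ⟨ψ, rfl⟩]
  -- main lemma for claims 2 and 4
  have main : ∀ φ : 𝓗,
      ((Top + χ * W * χ) - χ * W * χb * Rinv * (χb * W * χ)) φ = 0 →
      Hop ((χ - χb * Rinv * (χb * W * χ)) φ) = 0 ∧
      χ ((χ - χb * Rinv * (χb * W * χ)) φ) = φ := by
    intro φ hφ
    set u := Rinv (χb (W (χ φ))) with hu
    set q := χ φ - χb u with hq
    have hQapp : (χ - χb * Rinv * (χb * W * χ)) φ = q := by
      rw [hq, hu]
      simp [ContinuousLinearMap.sub_apply, ContinuousLinearMap.mul_apply]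
    have hHbu : Top u + χb (W (χb u)) = χb (W (χ φ)) := by
      have h := hRinv2 (χb (W (χ φ))) ⟨W (χ φ), rfl⟩
      rw [← hu] at h
      simpa [ContinuousLinearMap.add_apply, ContinuousLinearMap.mul_apply] using h
    have hTu : Top u = χb (W q) := by
      rw [hq, map_sub, map_sub, ← hHbu]
      abel
    have hφ' : Top φ + χ (W (χ φ)) - χ (W (χb u)) = 0 := by
      have h := hφ
      simp only [ContinuousLinearMap.sub_apply, ContinuousLinearMap.add_apply,
        ContinuousLinearMap.mul_apply] at h
      rw [← hu] at h
      exact h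
    have hTφ : Top φ = -(χ (W q)) := by
      rw [hq, map_sub, map_sub, neg_sub]
      rw [← sub_eq_zero, ← hφ']
      abel
    constructor
    · -- Hop q = 0
      rw [hQapp, ← hTW q]
      have e1 : Top q = χ (Top φ) - χb (Top u) := by
        rw [hq, map_sub, ← haχ' φ, ← haχb' u]
      rw [e1, hTφ, hTu, map_neg]
      calc -(χ (χ (W q))) - χb (χb (W q)) + W q
          = W q - (χ (χ (W q)) + χb (χb (W q))) := by abel
        _ = W q - W q := by rw [hone' (W q)]
        _ = 0 := sub_self _
    · -- χ q = φ
      rw [hQapp]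
      have hTw : Top (χ u + χb φ) = 0 := by
        rw [map_add, ← haχ' u, ← haχb' φ, hTu, hTφ, map_neg, hcomm' (W q)]
        abel
      have hbw : χb (χ u + χb φ) = 0 := by
        have h1 : Top (χb (χ u + χb φ)) = 0 := by
          rw [← haχb' (χ u + χb φ), hTw, map_zero]
        have h2 := hTinv1 (χb (χ u + χb φ)) ⟨χ u + χb φ, rfl⟩
        rw [h1, map_zero] at h2
        exact h2.symm
      have hχu : χb (χ u) = -(χb (χb φ)) := by
        rw [map_add] at hbw
        rw [← sub_eq_zero, ← hbw]
        abel
      calc χ q = χ (χ φ) - χb (χ u) := by rw [hq, map_sub, hcomm' u]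
        _ = χ (χ φ) + χb (χb φ) := by rw [hχu, sub_neg_eq_add]
        _ = φ := hone' φ
  refine ⟨?_, fun φ h => (main φ h).1, ?_, fun φ h => (main φ h).2⟩
  · -- claim 1
    intro ψ hψ
    simp only [ContinuousLinearMap.sub_apply, ContinuousLinearMap.add_apply,
      ContinuousLinearMap.mul_apply]
    rw [kerR ψ hψ, map_neg, map_neg, map_neg, sub_neg_eq_add]
    calc Top (χ ψ) + χ (W (χ (χ ψ))) + χ (W (χb (χb ψ)))
        = χ (Top ψ) + χ (W (χ (χ ψ) + χb (χb ψ))) := by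
          rw [← haχ' ψ, map_add, map_add]; abel
      _ = χ (Top ψ + W ψ) := by rw [hone' ψ, map_add]
      _ = χ (Hop ψ) := by rw [hTW ψ]
      _ = 0 := by rw [hψ, map_zero]
  · -- claim 3
    intro ψ hψ
    simp only [ContinuousLinearMap.sub_apply, ContinuousLinearMap.mul_apply]
    rw [kerR ψ hψ, map_neg, sub_neg_eq_add]
    exact hone' ψ
end

section
/- Let f : ℝ₊ → ℂ be bounded and measurable, and let H_f = dΓ(ω) with ω(k) = |k| be the free field Hamiltonian on the bosonic Fock space over L²(ℝ³). Then the pull-through formula holds: for every ψ in Fock space with finitely many particles and almost every k ∈ ℝ³, a(k) f(H_f) ψ = f(H_f + |k|) a(k) ψ, where (a(k₁)⋯a(k_l)ψ)_n(k_{l+1},…,k_{l+n}) := √((l+n)!/n!)·ψ_{l+n}(k₁,…,k_{l+n}). -/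
noncomputable section

/-- One-boson momentum space `ℝ³`. -/
abbrev K3 := EuclideanSpace ℝ (Fin 3)

/-- A Fock-space vector, identified with its sequence of `n`-particle wave functions. -/
abbrev FockVec := (n : ℕ) → (Fin n → K3) → ℂ

/-- The pointwise annihilation operator:
`(a(k)ψ)_n(k₁,…,k_n) = √(n+1)·ψ_{n+1}(k,k₁,…,k_n)`. -/
def annihilatePt (k : K3) (ψ : FockVec) : FockVec :=
  fun n xs => (Real.sqrt (n + 1) : ℝ) * ψ (n + 1) (Fin.cons k xs)

/-- The operator `f(H_f)` for `H_f = dΓ(ω)`, `ω(k) = |k|`: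
`(f(H_f)ψ)_n(k₁,…,k_n) = f(Σ|k_j|)·ψ_n(k₁,…,k_n)`. -/
def applyField (f : ℝ → ℂ) (ψ : FockVec) : FockVec :=
  fun n xs => f (∑ i, ‖xs i‖) * ψ n xs

/-- pull-through formula: for bounded measurable `f : ℝ₊ → ℂ`, every
Fock vector `ψ` with finitely many particles and every `k ∈ ℝ³`,
`a(k) f(H_f) ψ = f(H_f + |k|) a(k) ψ`. -/
theorem pull_through_formula
    (f : ℝ → ℂ) (hf_meas : Measurable f) (hf_bdd : ∃ C : ℝ, ∀ r : ℝ, ‖f r‖ ≤ C)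
    (ψ : FockVec) (hfin : ∃ N, ∀ n ≥ N, ψ n = 0) (k : K3) :
    annihilatePt k (applyField f ψ) =
      applyField (fun r => f (r + ‖k‖)) (annihilatePt k ψ) := by
  funext n xs
  simp only [annihilatePt, applyField, Fin.sum_univ_succ, Fin.cons_zero, Fin.cons_succ]
  rw [add_comm ‖k‖]
  ring

end
end

section
/- Let h = L²(ℝ³) and let F(h) be the bosonic Fock space. Given f₀ ∈ h, there exists a real-linear closed subspace k ⊆ h such that: (1) k is invariant under e^{−tω} for all t ≥ 0, where ω(k)=|k|; (2) k + ik = h; (3) the inner product ⟨f, g⟩ is real for all f, g ∈ k (equivalently the field operators Φ(f) = a*(f) + a(f) for f ∈ k mutually commute); (4) f₀ ∈ k. -/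
/-!
Let `θ = arg f₀` and let `k` consist of the `f ∈ L²` with `f(x) ∈ ℝ · e^{iθ(x)}` for a.e. `x`.
Every requirement is then pointwise: `f₀ ∈ k` by the polar decomposition; `e^{-tω}` is real;
`f = e^{iθ} (Re (e^{-iθ} f) + i Im (e^{-iθ} f))` splits `f` into `k + ik`; `⟨f, g⟩` is the
integral of a product of two real functions; and `k` is closed because an `L²`-convergent
sequence has an a.e. convergent subsequence.
-/

open MeasureTheory

noncomputable section

/-- The one-boson Hilbert space `h = L²(ℝ³)`. -/
abbrev OneBoson := Lp ℂ 2 (volume : Measure K3)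

open Complex Filter

namespace MeasureTheory.Lp

variable {α E : Type*} [MeasurableSpace α] {μ : Measure α} {p : ENNReal}

theorem isClosed_setOf_ae_mem [NormedAddCommGroup E] [Fact (1 ≤ p)] {C : α → Set E}
    (hC : ∀ x, IsClosed (C x)) : IsClosed {f : Lp E p μ | ∀ᵐ x ∂μ, f x ∈ C x} := by
  refine IsSeqClosed.isClosed fun s f hs hsf ↦ ?_
  obtain ⟨φ, -, hφ⟩ := (tendstoInMeasure_of_tendsto_Lp hsf).exists_seq_tendsto_ae
  filter_upwards [ae_all_iff.mpr hs, hφ] with x hsx hφx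
  exact (hC x).mem_of_tendsto hφx (Eventually.of_forall fun n ↦ hsx (φ n))

end MeasureTheory.Lp

variable {α : Type*} [MeasurableSpace α]

/-- Functions taking values a.e. on the real line `ℝ · e^{iθ(x)}`. -/
def realPhaseSubmodule (p : ENNReal) (μ : Measure α) (θ : α → ℝ) :
    Submodule ℝ (Lp ℂ p μ) where
  carrier := {f | ∀ᵐ x ∂μ, ((exp (θ x * I))⁻¹ * f x).im = 0}
  add_mem' {f g} hf hg := by
    filter_upwards [hf, hg, Lp.coeFn_add f g] with x hfx hgx hfg
    rw [hfg, Pi.add_apply, mul_add, add_im, hfx, hgx, add_zero]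
  zero_mem' := by
    filter_upwards [Lp.coeFn_zero ℂ p μ] with x hx
    rw [hx, Pi.zero_apply, mul_zero, zero_im]
  smul_mem' c f hf := by
    filter_upwards [hf, Lp.coeFn_smul c f] with x hfx hcf
    rw [hcf, Pi.smul_apply, real_smul, mul_left_comm, im_ofReal_mul, hfx, mul_zero]

namespace realPhaseSubmodule

variable {p : ENNReal} {μ : Measure α} {θ : α → ℝ}

theorem mem_iff {f : Lp ℂ p μ} :
    f ∈ realPhaseSubmodule p μ θ ↔ ∀ᵐ x ∂μ, ((exp (θ x * I))⁻¹ * f x).im = 0 :=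
  Iff.rfl

theorem isClosed [Fact (1 ≤ p)] : IsClosed (realPhaseSubmodule p μ θ : Set (Lp ℂ p μ)) :=
  Lp.isClosed_setOf_ae_mem (C := fun x ↦ {z | ((exp (θ x * I))⁻¹ * z).im = 0})
    fun _ ↦ isClosed_eq (by fun_prop) continuous_const

theorem exists_ae_eq_ofReal_mul_of_mem {f : Lp ℂ p μ} (hf : f ∈ realPhaseSubmodule p μ θ)
    {φ : α → ℝ} (hφ : AEStronglyMeasurable φ μ) {c : ℝ} (hφc : ∀ x, |φ x| ≤ c) :
    ∃ g ∈ realPhaseSubmodule p μ θ, g =ᵐ[μ] fun x ↦ (φ x : ℂ) * f x := by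
  have hmem : MemLp (fun x ↦ (φ x : ℂ) * f x) p μ :=
    (Lp.memLp f).of_le_mul ((continuous_ofReal.comp_aestronglyMeasurable hφ).mul
      (Lp.aestronglyMeasurable f))
      (Eventually.of_forall fun x ↦ by
        rw [norm_mul, norm_real, Real.norm_eq_abs]
        exact mul_le_mul_of_nonneg_right (hφc x) (norm_nonneg _))
  refine ⟨hmem.toLp _, ?_, hmem.coeFn_toLp⟩
  filter_upwards [hf, hmem.coeFn_toLp] with x hfx hgx
  rw [hgx, mul_left_comm, im_ofReal_mul, hfx, mul_zero]

theorem exists_ae_eq_phase_mul (hθ : Measurable θ) (f : Lp ℂ p μ) {r : α → ℝ}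
    (hr : AEStronglyMeasurable r μ) (hrf : ∀ x, |r x| ≤ ‖f x‖) :
    ∃ g ∈ realPhaseSubmodule p μ θ, g =ᵐ[μ] fun x ↦ exp (θ x * I) * r x := by
  have hmem : MemLp (fun x ↦ exp (θ x * I) * r x) p μ :=
    (Lp.memLp f).of_le_mul (c := 1) (by fun_prop)
      (Eventually.of_forall fun x ↦ by
        rw [norm_mul, norm_exp_ofReal_mul_I, norm_real, Real.norm_eq_abs, one_mul, one_mul]
        exact hrf x)
  refine ⟨hmem.toLp _, ?_, hmem.coeFn_toLp⟩
  filter_upwards [hmem.coeFn_toLp] with x hgx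
  rw [hgx, ← mul_assoc, inv_mul_cancel₀ (exp_ne_zero _), one_mul, ofReal_im]

theorem exists_eq_add_I_smul (hθ : Measurable θ) (f : Lp ℂ p μ) :
    ∃ g ∈ realPhaseSubmodule p μ θ, ∃ h ∈ realPhaseSubmodule p μ θ, f = g + I • h := by
  set A : α → ℂ := fun x ↦ (exp (θ x * I))⁻¹ * f x
  have hA : AEStronglyMeasurable A μ := by
    have := Lp.aestronglyMeasurable f
    fun_prop
  have hAf x : ‖A x‖ = ‖f x‖ := by
    rw [norm_mul, norm_inv, norm_exp_ofReal_mul_I, inv_one, one_mul]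
  obtain ⟨g, hg, hgA⟩ := exists_ae_eq_phase_mul hθ f (continuous_re.comp_aestronglyMeasurable hA)
    fun x ↦ (abs_re_le_norm _).trans (hAf x).le
  obtain ⟨h, hh, hhA⟩ := exists_ae_eq_phase_mul hθ f (continuous_im.comp_aestronglyMeasurable hA)
    fun x ↦ (abs_im_le_norm _).trans (hAf x).le
  refine ⟨g, hg, h, hh, Lp.ext ?_⟩
  filter_upwards [hgA, hhA, Lp.coeFn_add g (I • h), Lp.coeFn_smul I h] with x hgx hhx hsum hsmul
  rw [hsum, Pi.add_apply, hsmul, Pi.smul_apply, hgx, hhx, smul_eq_mul]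
  have hfA : f x = exp (θ x * I) * A x := by
    rw [← mul_assoc, mul_comm (exp _), inv_mul_cancel₀ (exp_ne_zero _), one_mul]
  rw [hfA]
  conv_lhs => rw [← re_add_im (A x)]
  ring

theorem im_inner_eq_zero {f g : Lp ℂ 2 μ} (hf : f ∈ realPhaseSubmodule 2 μ θ)
    (hg : g ∈ realPhaseSubmodule 2 μ θ) : (inner ℂ f g).im = 0 := by
  have hpt : ∀ᵐ x ∂μ, (inner ℂ (f x) (g x)).im = 0 := by
    filter_upwards [hf, hg] with x hfx hgx
    set u := (exp (θ x * I))⁻¹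
    have hu : (starRingEnd ℂ) u * u = 1 := by
      rw [conj_mul', norm_inv, norm_exp_ofReal_mul_I, inv_one, ofReal_one, one_pow]
    have hfg : inner ℂ (f x) (g x) = (starRingEnd ℂ) (u * f x) * (u * g x) := by
      rw [RCLike.inner_apply', map_mul]
      linear_combination (-((starRingEnd ℂ) (f x) * g x)) * hu
    rw [hfg, mul_im, conj_re, conj_im, hfx, hgx, neg_zero, mul_zero, zero_mul, add_zero]
  rw [L2.inner_def, ← RCLike.im_eq_complex_im, ← integral_im (L2.integrable_inner f g)]
  exact integral_eq_zero_of_ae hpt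

theorem mem_arg (f : Lp ℂ p μ) : f ∈ realPhaseSubmodule p μ (fun x ↦ arg (f x)) :=
  mem_iff.2 <| Eventually.of_forall fun x ↦ by
    nth_rewrite 2 [← norm_mul_exp_arg_mul_I (f x)]
    rw [mul_left_comm, inv_mul_cancel₀ (exp_ne_zero _), mul_one, ofReal_im]

end realPhaseSubmodule

open realPhaseSubmodule in
/-- given `f₀ ∈ h = L²(ℝ³)` there is a real-linear closed subspace
`k ⊆ h` such that (1) `k` is invariant under multiplication by `e^{−tω}` (`ω(k)=|k|`)
for all `t ≥ 0`; (2) `k + ik = h`; (3) `⟨f,g⟩` is real for all `f,g ∈ k` (equivalently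
the field operators `Φ(f)`, `f ∈ k`, commute); (4) `f₀ ∈ k`. -/
theorem exists_real_subspace
    (f₀ : OneBoson) :
    ∃ k : Submodule ℝ OneBoson,
      IsClosed (k : Set OneBoson) ∧
      (∀ t : ℝ, 0 ≤ t → ∀ f ∈ k, ∃ g ∈ k,
        (∀ᵐ x : K3, g x = (Real.exp (-t * ‖x‖) : ℂ) * f x)) ∧
      (∀ f : OneBoson, ∃ g ∈ k, ∃ h ∈ k, f = g + Complex.I • h) ∧
      (∀ f ∈ k, ∀ g ∈ k, (inner ℂ f g : ℂ).im = 0) ∧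
      f₀ ∈ k := by
  have hθ : Measurable fun x ↦ arg (f₀ x) :=
    measurable_arg.comp (Lp.stronglyMeasurable f₀).measurable
  refine ⟨realPhaseSubmodule 2 volume (fun x ↦ arg (f₀ x)), isClosed, fun t ht f hf ↦ ?_,
    exists_eq_add_I_smul hθ, fun f hf g hg ↦ im_inner_eq_zero hf hg, mem_arg f₀⟩
  refine exists_ae_eq_ofReal_mul_of_mem hf (by fun_prop) (c := 1) fun x ↦ ?_
  rw [abs_of_pos (Real.exp_pos _), Real.exp_le_one_iff]
  exact mul_nonpos_of_nonpos_of_nonneg (neg_nonpos.2 ht) (norm_nonneg x)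

end
end
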